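/- arXiv:2502.08604 — 3 statements merged into one kernel-verified Lean document; each statement's English description precedes it below -/
import Mathlib

section
/- Suppose X : ℝ → M_N(ℂ) satisfies X(t) = U(t)(X(0) + t L(0))U(t)^{-1} for invertible matrices U(t), and suppose X(t) = X(0) + t v I_N for all t (traveling poles). Then for every t ≠ 0, det((1/t)X(0) + v I_N - λ I_N) = det((1/t)X(0) + L(0) - λ I_N) for all λ ∈ ℂ, and consequently (letting t → ∞) the characteristic polynomial of L(0) is (λ - v)^N. If moreover L(0) is diagonalizable, then L(0) = v I_N. -/
open Polynomial

lemma eval_charpoly_aux {N : ℕ} (M : Matrix (Fin N) (Fin N) ℂ) (lam : ℂ) :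
    (Matrix.charpoly M).eval lam = (lam • (1 : Matrix (Fin N) (Fin N) ℂ) - M).det := by
  rw [Matrix.charpoly, ← coe_evalRingHom, RingHom.map_det]
  congr 1
  ext i j
  by_cases h : i = j
  · subst h
    simp [Matrix.charmatrix_apply_eq, Matrix.one_apply]
  · simp [Matrix.charmatrix_apply_ne _ _ _ h, Matrix.one_apply_ne h, Matrix.smul_apply]

/-- If `X(t) = U(t)(X(0) + t L(0))U(t)⁻¹` and `X(t) = X(0) + t v I`, then the characteristic
polynomials of `(1/t)X(0) + vI` and `(1/t)X(0) + L(0)` agree for all `t ≠ 0`, the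
characteristic polynomial of `L(0)` is `(λ - v)^N`, and if `L(0)` is diagonalizable then
`L(0) = v·I`. -/
theorem traveling_poles_charpoly
    (N : ℕ) (v : ℂ)
    (X U : ℝ → Matrix (Fin N) (Fin N) ℂ) (L₀ : Matrix (Fin N) (Fin N) ℂ)
    (hUinv : ∀ t, IsUnit (U t))
    (hX : ∀ t : ℝ, X t = U t * (X 0 + (t : ℂ) • L₀) * (U t)⁻¹)
    (hTrav : ∀ t : ℝ, X t = X 0 + ((t : ℂ) * v) • (1 : Matrix (Fin N) (Fin N) ℂ)) :
    (∀ t : ℝ, t ≠ 0 → ∀ lam : ℂ,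
        ((1 / (t : ℂ)) • X 0 + v • 1 - lam • 1).det =
          ((1 / (t : ℂ)) • X 0 + L₀ - lam • 1).det) ∧
      Matrix.charpoly L₀ = (Polynomial.X - Polynomial.C v) ^ N ∧
      ((∃ P : Matrix (Fin N) (Fin N) ℂ, ∃ d : Fin N → ℂ,
          IsUnit P ∧ L₀ = P * Matrix.diagonal d * P⁻¹) →
        L₀ = v • (1 : Matrix (Fin N) (Fin N) ℂ)) := by
  -- key determinant identity
  have key : ∀ (t : ℝ) (μ : ℂ),
      (X 0 + ((t:ℂ)*v) • 1 - μ • 1).det = (X 0 + (t:ℂ) • L₀ - μ • 1).det := by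
    intro t μ
    have h1 : U t * (X 0 + (t:ℂ) • L₀) * (U t)⁻¹
        = X 0 + ((t:ℂ)*v) • (1 : Matrix (Fin N) (Fin N) ℂ) := by
      rw [← hX t, hTrav t]
    have hU := hUinv t
    have hUU : U t * (U t)⁻¹ = 1 :=
      Matrix.mul_nonsing_inv _ ((Matrix.isUnit_iff_isUnit_det _).mp hU)
    have h2 : X 0 + ((t:ℂ)*v) • 1 - μ • 1
        = U t * (X 0 + (t:ℂ) • L₀ - μ • 1) * (U t)⁻¹ := by
      rw [Matrix.mul_sub, Matrix.sub_mul, h1]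
      congr 1
      rw [Matrix.mul_smul, Matrix.mul_one, Matrix.smul_mul, hUU]
    rw [h2, Matrix.det_conj hU]
  -- part 1
  have part1 : ∀ t : ℝ, t ≠ 0 → ∀ lam : ℂ,
      ((1 / (t : ℂ)) • X 0 + v • 1 - lam • 1).det =
        ((1 / (t : ℂ)) • X 0 + L₀ - lam • 1).det := by
    intro t ht lam
    have htC : (t:ℂ) ≠ 0 := Complex.ofReal_ne_zero.mpr ht
    have e1 : (1/(t:ℂ)) • (X 0 + ((t:ℂ)*v) • 1 - ((t:ℂ)*lam) • 1)
        = (1/(t:ℂ)) • X 0 + v • 1 - lam • (1 : Matrix (Fin N) (Fin N) ℂ) := by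
      rw [smul_sub, smul_add, smul_smul, smul_smul]
      have hv : (1/(t:ℂ)) * ((t:ℂ)*v) = v := by field_simp
      have hl : (1/(t:ℂ)) * ((t:ℂ)*lam) = lam := by field_simp
      rw [hv, hl]
    have e2 : (1/(t:ℂ)) • (X 0 + (t:ℂ) • L₀ - ((t:ℂ)*lam) • 1)
        = (1/(t:ℂ)) • X 0 + L₀ - lam • (1 : Matrix (Fin N) (Fin N) ℂ) := by
      rw [smul_sub, smul_add, smul_smul, smul_smul]
      have h1 : (1/(t:ℂ)) * (t:ℂ) = 1 := by field_simp
      have hl : (1/(t:ℂ)) * ((t:ℂ)*lam) = lam := by field_simp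
      rw [h1, hl, one_smul]
    calc ((1 / (t : ℂ)) • X 0 + v • 1 - lam • 1).det
        = ((1/(t:ℂ)) • (X 0 + ((t:ℂ)*v) • 1 - ((t:ℂ)*lam) • 1)).det := by rw [e1]
      _ = (1/(t:ℂ))^(Fintype.card (Fin N)) * (X 0 + ((t:ℂ)*v) • 1 - ((t:ℂ)*lam) • 1).det :=
          Matrix.det_smul _ _
      _ = (1/(t:ℂ))^(Fintype.card (Fin N)) * (X 0 + (t:ℂ) • L₀ - ((t:ℂ)*lam) • 1).det := by
          rw [key t ((t:ℂ)*lam)]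
      _ = ((1/(t:ℂ)) • (X 0 + (t:ℂ) • L₀ - ((t:ℂ)*lam) • 1)).det := (Matrix.det_smul _ _).symm
      _ = ((1 / (t : ℂ)) • X 0 + L₀ - lam • 1).det := by rw [e2]
  -- pointwise: det(λI - L₀) = (λ - v)^N, via the limit t → ∞
  have hpt : ∀ lam : ℂ,
      (lam • (1 : Matrix (Fin N) (Fin N) ℂ) - L₀).det = (lam - v)^N := by
    intro lam
    have hdet : Continuous fun A : Matrix (Fin N) (Fin N) ℂ => A.det :=
      Continuous.matrix_det continuous_id
    have h1 : Filter.Tendsto (fun t : ℝ => (1/(t:ℂ))) Filter.atTop (nhds 0) := by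
      have := (Complex.continuous_ofReal.tendsto 0).comp tendsto_inv_atTop_zero
      simpa [Function.comp_def, one_div, Complex.ofReal_inv] using this
    have hlim : ∀ M : Matrix (Fin N) (Fin N) ℂ, Filter.Tendsto
        (fun t : ℝ => ((1/(t:ℂ)) • X 0 + M - lam • 1).det)
        Filter.atTop (nhds (((0:ℂ) • X 0 + M - lam • 1).det)) := by
      intro M
      have hm : Filter.Tendsto (fun t : ℝ => (1/(t:ℂ)) • X 0 + M - lam • 1)
          Filter.atTop (nhds ((0:ℂ) • X 0 + M - lam • 1)) :=
        ((h1.smul_const (X 0)).add_const M).sub_const (lam • 1)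
      exact (hdet.tendsto _).comp hm
    have hA := hlim L₀
    have hB := hlim (v • 1)
    have heq : (fun t : ℝ => ((1/(t:ℂ)) • X 0 + L₀ - lam • 1).det) =ᶠ[Filter.atTop]
        (fun t : ℝ => ((1/(t:ℂ)) • X 0 + v • 1 - lam • 1).det) := by
      filter_upwards [Filter.eventually_ge_atTop (1:ℝ)] with t ht
      exact (part1 t (by linarith) lam).symm
    have := tendsto_nhds_unique (hA.congr' heq) hB
    have hL : ((0:ℂ) • X 0 + L₀ - lam • 1).det = ((0:ℂ) • X 0 + v • 1 - lam • 1).det := this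
    simp only [zero_smul, zero_add] at hL
    have h2 : (L₀ - lam • (1 : Matrix (Fin N) (Fin N) ℂ)).det = (v - lam)^N := by
      rw [hL]
      rw [← sub_smul, Matrix.det_smul, Matrix.det_one, mul_one, Fintype.card_fin]
    have h3 : lam • (1 : Matrix (Fin N) (Fin N) ℂ) - L₀ = -(L₀ - lam • 1) := (neg_sub _ _).symm
    rw [h3, Matrix.det_neg, h2, Fintype.card_fin]
    rw [← neg_pow, neg_sub]
  -- part 2
  have part2 : Matrix.charpoly L₀ = (Polynomial.X - Polynomial.C v) ^ N := by
    apply Polynomial.funext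
    intro lam
    rw [eval_charpoly_aux, hpt lam]
    simp
  refine ⟨part1, part2, ?_⟩
  -- part 3
  rintro ⟨P, d, hP, hL⟩
  have hd : ∀ i, d i = v := by
    intro i
    have h := hpt (d i)
    rw [hL] at h
    have hPP : P * P⁻¹ = 1 :=
      Matrix.mul_nonsing_inv _ ((Matrix.isUnit_iff_isUnit_det _).mp hP)
    have hconj : d i • (1 : Matrix (Fin N) (Fin N) ℂ) - P * Matrix.diagonal d * P⁻¹
        = P * (d i • 1 - Matrix.diagonal d) * P⁻¹ := by
      rw [Matrix.mul_sub, Matrix.sub_mul]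
      congr 1
      rw [Matrix.mul_smul, Matrix.mul_one, Matrix.smul_mul, hPP]
    rw [hconj, Matrix.det_conj hP] at h
    have hdiag : d i • (1 : Matrix (Fin N) (Fin N) ℂ) - Matrix.diagonal d
        = Matrix.diagonal (fun j => d i - d j) := by
      rw [Matrix.smul_one_eq_diagonal, Matrix.diagonal_sub]
    rw [hdiag, Matrix.det_diagonal] at h
    have hzero : (∏ j, (d i - d j)) = 0 :=
      Finset.prod_eq_zero (Finset.mem_univ i) (sub_self _)
    rw [hzero] at h
    have hN : N ≠ 0 := by
      intro h0
      exact absurd i.2 (by omega)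
    have := pow_eq_zero_iff hN |>.mp h.symm
    exact sub_eq_zero.mp this
  have hdiagv : Matrix.diagonal d = v • (1 : Matrix (Fin N) (Fin N) ℂ) := by
    have hdd : d = fun _ => v := funext hd
    rw [Matrix.smul_one_eq_diagonal, hdd]
  have hPP : P * P⁻¹ = 1 :=
    Matrix.mul_nonsing_inv _ ((Matrix.isUnit_iff_isUnit_det _).mp hP)
  rw [hL, hdiagv, Matrix.mul_smul, Matrix.mul_one, Matrix.smul_mul, hPP]
end

section
/- Let y₁,…,y_m ∈ ℂ be pairwise distinct points with Im(y_j) > 0, and A₁,…,A_m ∈ ℂ³. If the function x ↦ Σ_j A_j/(x - y_j)^{3/2} vanishes identically on an open real interval, then A_j = 0 for all j. -/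
/-!
Work with one coordinate `c_j` of the `A_j` at a time, and `e = -3/2`. Since `Im y_j ≠ 0`,
each `x ↦ (x - y_j)^e` is smooth on all of `ℝ` with `n`-th derivative
`e (e - 1) ⋯ (e - n + 1) (x - y_j)^(e - n)`. If the sum vanishes near `x₀`, so do all its
derivatives at `x₀`, and since `e ∉ ℕ` the falling factorial never vanishes. Writing
`w_j = x₀ - y_j`, this gives `∑_j (c_j w_j^e) (w_j⁻¹)^n = 0` for every `n`, a Vandermonde
system in the distinct nodes `w_j⁻¹`, so `c_j w_j^e = 0` and hence `c_j = 0`.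
-/

open Complex Finset Polynomial Filter Topology

theorem descPochhammer_eval_ne_zero {R : Type*} [CommRing R] [IsDomain R] {r : R}
    (hr : ∀ k : ℕ, r ≠ k) (n : ℕ) : (descPochhammer R n).eval r ≠ 0 := by
  rw [descPochhammer_eval_eq_prod_range]
  exact prod_ne_zero_iff.mpr fun k _ => sub_ne_zero.mpr (hr k)

theorem ofReal_sub_mem_slitPlane {y : ℂ} (hy : y.im ≠ 0) (x : ℝ) : (x : ℂ) - y ∈ slitPlane :=
  mem_slitPlane_iff.mpr (Or.inr (by simpa using hy))

theorem hasDerivAt_ofReal_sub_cpow_const {y : ℂ} (hy : y.im ≠ 0) (e : ℂ) (x : ℝ) :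
    HasDerivAt (fun t : ℝ => ((t : ℂ) - y) ^ e) (e * ((x : ℂ) - y) ^ (e - 1)) x := by
  simpa using (((hasDerivAt_id (x : ℂ)).sub_const y).cpow_const
    (ofReal_sub_mem_slitPlane hy x)).comp_ofReal

theorem iter_deriv_sum_mul_ofReal_sub_cpow {ι : Type*} (s : Finset ι) {y : ι → ℂ}
    (hy : ∀ j, (y j).im ≠ 0) (n : ℕ) : ∀ (c : ι → ℂ) (e : ℂ),
    deriv^[n] (fun t : ℝ => ∑ j ∈ s, c j * ((t : ℂ) - y j) ^ e) =
      fun t : ℝ => ∑ j ∈ s, (descPochhammer ℂ n).eval e * c j * ((t : ℂ) - y j) ^ (e - n) := by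
  induction n with
  | zero => simp
  | succ n ih =>
    intro c e
    have hderiv : deriv (fun t : ℝ => ∑ j ∈ s, c j * ((t : ℂ) - y j) ^ e) =
        fun t : ℝ => ∑ j ∈ s, (e * c j) * ((t : ℂ) - y j) ^ (e - 1) := by
      funext t
      refine (HasDerivAt.fun_sum fun j _ =>
        (hasDerivAt_ofReal_sub_cpow_const (hy j) e t).const_mul (c j)).deriv.trans ?_
      exact sum_congr rfl fun j _ => by ring
    rw [Function.iterate_succ_apply, hderiv, ih]
    funext t
    refine sum_congr rfl fun j _ => ?_
    rw [descPochhammer_succ_left, eval_mul, eval_comp, eval_X, eval_sub, eval_X, eval_one,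
      Nat.cast_succ, sub_sub, add_comm (n : ℂ)]
    ring

theorem eq_zero_of_forall_sum_mul_cpow_sub_natCast_eq_zero {m : ℕ} {w : Fin m → ℂ}
    (hw : Function.Injective w) (hw0 : ∀ j, w j ≠ 0) (c : Fin m → ℂ) (e : ℂ)
    (h : ∀ n : ℕ, ∑ j, c j * w j ^ (e - n) = 0) : c = 0 := by
  have hpow : ∀ (n : ℕ) j, w j ^ (e - n) = w j ^ e * (w j)⁻¹ ^ n := fun n j => by
    rw [cpow_sub _ _ (hw0 j), cpow_natCast, div_eq_mul_inv, inv_pow]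
  have hvdm : (fun j => c j * w j ^ e) = 0 :=
    Matrix.eq_zero_of_forall_pow_sum_mul_pow_eq_zero (inv_injective.comp hw) fun i => by
      simpa only [hpow, mul_assoc, Function.comp_apply] using h i
  funext j
  exact (mul_eq_zero.mp (congrFun hvdm j)).resolve_right (cpow_ne_zero_iff.mpr (Or.inl (hw0 j)))

theorem eq_zero_of_sum_mul_ofReal_sub_cpow_eventuallyEq_zero {m : ℕ} {y : Fin m → ℂ}
    (hy : Function.Injective y) (hyim : ∀ j, (y j).im ≠ 0) {e : ℂ} (he : ∀ k : ℕ, e ≠ k)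
    (c : Fin m → ℂ) {x₀ : ℝ}
    (h : (fun x : ℝ => ∑ j, c j * ((x : ℂ) - y j) ^ e) =ᶠ[𝓝 x₀] 0) : c = 0 := by
  refine eq_zero_of_forall_sum_mul_cpow_sub_natCast_eq_zero (sub_right_injective.comp hy)
    (fun j => slitPlane_ne_zero (ofReal_sub_mem_slitPlane (hyim j) x₀)) c e fun n => ?_
  have hn := h.iteratedDeriv_eq n
  rw [iteratedDeriv_const_zero, iteratedDeriv_eq_iterate,
    iter_deriv_sum_mul_ofReal_sub_cpow univ hyim] at hn
  simp only [mul_assoc, ← mul_sum] at hn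
  exact (mul_eq_zero.mp hn).resolve_left (descPochhammer_eval_ne_zero he n)

/-- If `x ↦ Σ_j A_j/(x - y_j)^{3/2}` vanishes on an open real interval, with the `y_j`
pairwise distinct in the upper half plane, then all coefficients `A_j` vanish. -/
theorem half_integer_power_vanishing
    (m : ℕ) (y : Fin m → ℂ) (hy : Function.Injective y) (hyim : ∀ j, 0 < (y j).im)
    (A : Fin m → EuclideanSpace ℂ (Fin 3))
    (a b : ℝ) (hab : a < b)
    (h : ∀ x ∈ Set.Ioo a b,
      ∑ j, ((((x : ℂ) - y j) ^ ((3 : ℂ) / 2))⁻¹) • A j = 0) :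
    ∀ j, A j = 0 := by
  have hmid : (a + b) / 2 ∈ Set.Ioo a b := ⟨by linarith, by linarith⟩
  have hexp : ∀ k : ℕ, -(3 / 2 : ℂ) ≠ k := fun k hk => by
    have := congrArg re hk
    norm_num at this
    linarith [k.cast_nonneg (α := ℝ)]
  intro j
  ext i
  have hcoord := eq_zero_of_sum_mul_ofReal_sub_cpow_eventuallyEq_zero hy (fun j => (hyim j).ne')
    hexp (fun j => A j i) (x₀ := (a + b) / 2) <| by
      filter_upwards [isOpen_Ioo.mem_nhds hmid] with x hx
      simpa [cpow_neg, mul_comm] using congrArg (· i) (h x hx)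
  exact congrFun hcoord j
end

section
/- Let x_j, s_j : [0,∞) satisfy the Calogero–Moser spin system ṡ_j = 2i Σ_{k≠j} (s_j × s_k)/(x_j - x_k)², ẍ_j = -4 Σ_{k≠j} (s_j·s_k)/(x_j - x_k)³, and assume there are constants η > 0, 𝒮 > 0 and t₀ with |x_j(t) - x_k(t)| ≥ η t and |s_j(t)| ≤ 𝒮 for all t > t₀ and j ≠ k. Then: (a) each ẋ_j(t) converges to some v_j ∈ ℂ with |ẋ_j(t) - v_j| ≤ 4(N-1)𝒮² / (η³ t²); (b) each x_j(t) - v_j t converges; (c) each s_j(t) converges, with |s_j(t₂) - s_j(t₁)| ≤ 2(N-1)𝒮²/(η² t₁) for t₂ ≥ t₁ > t₀. -/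
open Filter Topology Finset WithLp Matrix

/-!
With separations `‖xⱼ - xₖ‖ ≥ ηt` and spins of size at most `𝒮`, the right-hand sides of the
equations of motion are `O(t⁻²)` for `ṡⱼ` and `O(t⁻³)` for `ẍⱼ`; for the spins this uses
`‖a × b‖ ≤ ‖a‖ ‖b‖`, which over `ℂ³` follows from Lagrange's identity
`‖a × b‖² + |a · b̄|² = ‖a‖² ‖b‖²`. A function whose derivative is bounded by `C / t^(n+2)` is
compared with the antiderivative `-C / ((n+1) t^(n+1))` of that bound, so its increments after
`t₁` are at most `C / t₁^(n+1)`: it is Cauchy at infinity and converges at that rate. Applied to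
`ẋⱼ` (`n = 1`) this gives `vⱼ` and the `t⁻²` rate, which in turn makes the derivative of
`xⱼ - vⱼ t` of order `t⁻²`; applied to `xⱼ - vⱼ t` and to `sⱼ` (`n = 0`) it gives the other limits.

Spins are measured through `toLp 2` in `EuclideanSpace ℂ (Fin 3)`, since the norm on
`Fin 3 → ℂ` is the sup norm.
-/

theorem exists_tendsto_of_norm_sub_le {E : Type*} [NormedAddCommGroup E] [CompleteSpace E]
    {f : ℝ → E} {b : ℝ → ℝ} {t₀ : ℝ} (hb : Tendsto b atTop (𝓝 0))
    (hf : ∀ t₁ t₂, t₀ < t₁ → t₁ ≤ t₂ → ‖f t₂ - f t₁‖ ≤ b t₁) :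
    ∃ l, Tendsto f atTop (𝓝 l) ∧ ∀ t, t₀ < t → ‖f t - l‖ ≤ b t := by
  have hcauchy : CauchySeq f := by
    refine Metric.cauchySeq_iff'.2 fun ε hε => ?_
    obtain ⟨T, hT⟩ := eventually_atTop.1
      ((eventually_gt_atTop t₀).and (hb.eventually (gt_mem_nhds hε)))
    exact ⟨T, fun t ht => (dist_eq_norm _ _).trans_lt
      ((hf T t (hT T le_rfl).1 ht).trans_lt (hT T le_rfl).2)⟩
  obtain ⟨l, hl⟩ := cauchySeq_tendsto_of_complete hcauchy
  refine ⟨l, hl, fun t ht => ?_⟩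
  rw [norm_sub_rev]
  exact le_of_tendsto ((hl.sub_const (f t)).norm)
    ((eventually_ge_atTop t).mono fun u hu => hf t u ht hu)

section Decay

variable {E : Type*} [NormedAddCommGroup E] [NormedSpace ℝ E]

theorem norm_sub_le_of_norm_deriv_le_deriv {f f' : ℝ → E} {B B' : ℝ → ℝ} {a b : ℝ}
    (hab : a ≤ b) (hf : ∀ t ∈ Set.Icc a b, HasDerivAt f (f' t) t)
    (hB : ∀ t ∈ Set.Icc a b, HasDerivAt B (B' t) t)
    (hf' : ∀ t ∈ Set.Ico a b, ‖f' t‖ ≤ B' t) :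
    ‖f b - f a‖ ≤ B b - B a := by
  refine image_norm_le_of_norm_deriv_right_le_deriv_boundary' (f := fun t => f t - f a)
    (B := fun t => B t - B a) ?_ ?_ (by simp) ?_ ?_ hf' (Set.right_mem_Icc.2 hab)
  · exact fun t ht => ((hf t ht).sub_const _).continuousAt.continuousWithinAt
  · exact fun t ht => ((hf t (Set.Ico_subset_Icc_self ht)).sub_const _).hasDerivWithinAt
  · exact fun t ht => ((hB t ht).sub_const _).continuousAt.continuousWithinAt
  · exact fun t ht => ((hB t (Set.Ico_subset_Icc_self ht)).sub_const _).hasDerivWithinAt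

theorem hasDerivAt_neg_div_mul_pow (C : ℝ) (n : ℕ) {t : ℝ} (ht : t ≠ 0) :
    HasDerivAt (fun u : ℝ => -(C / ((n + 1) * u ^ (n + 1)))) (C / t ^ (n + 2)) t := by
  have hn : (n + 1 : ℝ) ≠ 0 := by positivity
  have h := ((((hasDerivAt_pow (n + 1) t).const_mul (n + 1 : ℝ)).inv
    (mul_ne_zero hn (pow_ne_zero _ ht))).const_mul C).neg
  refine (h.congr_deriv ?_).congr_of_eventuallyEq (.of_forall fun u => ?_)
  · push_cast
    field_simp
    ring
  · simp [div_eq_mul_inv]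

theorem norm_sub_le_of_norm_deriv_le_div_pow {f f' : ℝ → E} {t₀ C : ℝ} (n : ℕ) (ht₀ : 0 ≤ t₀)
    (hf : ∀ t, t₀ < t → HasDerivAt f (f' t) t)
    (hf' : ∀ t, t₀ < t → ‖f' t‖ ≤ C / t ^ (n + 2))
    {t₁ t₂ : ℝ} (h₁ : t₀ < t₁) (h₁₂ : t₁ ≤ t₂) :
    ‖f t₂ - f t₁‖ ≤ C / t₁ ^ (n + 1) := by
  have ht₁ : 0 < t₁ := by linarith
  have hC : 0 ≤ C := by
    have ht₁' : 0 < t₁ ^ (n + 2) := pow_pos ht₁ _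
    simpa [ht₁'.ne'] using mul_nonneg ((norm_nonneg _).trans (hf' t₁ h₁)) ht₁'.le
  have hcompare := norm_sub_le_of_norm_deriv_le_deriv h₁₂
    (fun t ht => hf t (h₁.trans_le ht.1))
    (fun t ht => hasDerivAt_neg_div_mul_pow C n (by linarith [ht.1]))
    (fun t ht => hf' t (h₁.trans_le ht.1))
  have h₂ : 0 ≤ C / ((n + 1) * t₂ ^ (n + 1)) := by
    have : 0 < t₂ := by linarith
    positivity
  have h₁' : C / ((n + 1) * t₁ ^ (n + 1)) ≤ C / t₁ ^ (n + 1) :=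
    div_le_div_of_nonneg_left hC (by positivity)
      (le_mul_of_one_le_left (by positivity) (by linarith [n.cast_nonneg (α := ℝ)]))
  linarith

theorem exists_tendsto_of_norm_deriv_le_div_pow [CompleteSpace E] {f f' : ℝ → E} {t₀ C : ℝ}
    (n : ℕ) (ht₀ : 0 ≤ t₀) (hf : ∀ t, t₀ < t → HasDerivAt f (f' t) t)
    (hf' : ∀ t, t₀ < t → ‖f' t‖ ≤ C / t ^ (n + 2)) :
    ∃ l, Tendsto f atTop (𝓝 l) ∧ ∀ t, t₀ < t → ‖f t - l‖ ≤ C / t ^ (n + 1) :=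
  exists_tendsto_of_norm_sub_le (tendsto_const_nhds.div_atTop (tendsto_pow_atTop n.succ_ne_zero))
    fun _ _ h₁ h₁₂ => norm_sub_le_of_norm_deriv_le_div_pow n ht₀ hf hf' h₁ h₁₂

end Decay

theorem HasDerivAt.toLp {ι : Type*} [Fintype ι] {F : ι → Type*}
    [∀ i, NormedAddCommGroup (F i)] [∀ i, NormedSpace ℝ (F i)] (p : ENNReal) [Fact (1 ≤ p)]
    {f : ℝ → ∀ i, F i} {f' : ∀ i, F i} {t : ℝ} (h : HasDerivAt f f' t) :
    HasDerivAt (fun u => toLp p (f u)) (toLp p f') t :=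
  (PiLp.hasFDerivAt_toLp p (f t)).comp_hasDerivAt t h

theorem sum_normSq_cross_add_normSq_dotProduct_star (a b : Fin 3 → ℂ) :
    ∑ i, Complex.normSq ((a ⨯₃ b) i) + Complex.normSq (a ⬝ᵥ star b) =
      (∑ i, Complex.normSq (a i)) * ∑ i, Complex.normSq (b i) := by
  simp only [cross_apply, dotProduct, Fin.sum_univ_three, Complex.normSq_apply, Pi.star_apply,
    Complex.star_def, cons_val_zero, cons_val_one, cons_val_two, head_cons, tail_cons,
    Complex.sub_re, Complex.sub_im, Complex.add_re, Complex.add_im, Complex.mul_re,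
    Complex.mul_im, Complex.conj_re, Complex.conj_im]
  ring

theorem norm_toLp_cross_le (a b : Fin 3 → ℂ) :
    ‖toLp 2 (a ⨯₃ b)‖ ≤ ‖toLp 2 a‖ * ‖toLp 2 b‖ := by
  have h := sum_normSq_cross_add_normSq_dotProduct_star a b
  rw [← sq_le_sq₀ (norm_nonneg _) (by positivity), mul_pow]
  simp only [EuclideanSpace.norm_sq_eq, Complex.sq_norm]
  nlinarith [Complex.normSq_nonneg (a ⬝ᵥ star b)]

theorem norm_dotProduct_le {ι : Type*} [Fintype ι] (a b : ι → ℂ) :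
    ‖a ⬝ᵥ b‖ ≤ ‖toLp 2 a‖ * ‖toLp 2 b‖ := by
  have h : a ⬝ᵥ b = inner ℂ (toLp 2 (star a)) (toLp 2 b) := by
    simp [PiLp.inner_apply, dotProduct, mul_comm]
  have h' : ‖toLp 2 (star a)‖ = ‖toLp 2 a‖ := by
    simp [EuclideanSpace.norm_eq]
  exact h ▸ h' ▸ norm_inner_le_norm _ _

theorem norm_div_pow_le {c w : ℂ} {r : ℝ} (hr : 0 < r) (hw : r ≤ ‖w‖) (p : ℕ) :
    ‖c / w ^ p‖ ≤ ‖c‖ / r ^ p := by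
  rw [norm_div, norm_pow]
  exact div_le_div_of_nonneg_left (norm_nonneg _) (pow_pos hr p) (pow_le_pow_left₀ hr.le hw p)

theorem norm_sum_erase_le {ι E : Type*} [Fintype ι] [DecidableEq ι] [SeminormedAddCommGroup E]
    (f : ι → E) (j : ι) {M : ℝ} (h : ∀ k, k ≠ j → ‖f k‖ ≤ M) :
    ‖∑ k ∈ univ.erase j, f k‖ ≤ (Fintype.card ι - 1 : ℝ) * M := by
  refine (norm_sum_le_of_le _ fun k hk => h k (ne_of_mem_erase hk)).trans_eq ?_
  rw [sum_const, card_erase_of_mem (mem_univ j), card_univ, nsmul_eq_mul,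
    Nat.cast_sub (Fintype.card_pos_iff.2 ⟨j⟩), Nat.cast_one]

section Field

variable {ι : Type*} [Fintype ι] [DecidableEq ι] (z : ι → ℂ) (σ : ι → Fin 3 → ℂ) (j : ι)
  {r S : ℝ}

theorem norm_spinField_le (hr : 0 < r) (hz : ∀ k, j ≠ k → r ≤ ‖z j - z k‖)
    (hσ : ∀ k, ‖toLp 2 (σ k)‖ ≤ S) :
    ‖toLp 2 (∑ k ∈ univ.erase j, (2 * Complex.I / (z j - z k) ^ 2) • σ j ⨯₃ σ k)‖ ≤
      (Fintype.card ι - 1 : ℝ) * (2 * S ^ 2 / r ^ 2) := by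
  rw [toLp_sum]
  refine norm_sum_erase_le _ j fun k hk => ?_
  have hS : 0 ≤ S := (norm_nonneg _).trans (hσ j)
  rw [toLp_smul, norm_smul]
  calc _ ≤ ‖2 * Complex.I‖ / r ^ 2 * (‖toLp 2 (σ j)‖ * ‖toLp 2 (σ k)‖) :=
        mul_le_mul (norm_div_pow_le hr (hz k (Ne.symm hk)) 2) (norm_toLp_cross_le _ _)
          (norm_nonneg _) (by positivity)
    _ ≤ 2 / r ^ 2 * (S * S) := by
        rw [norm_mul, Complex.norm_two, Complex.norm_I, mul_one]
        gcongr
        exacts [hσ j, hσ k]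
    _ = 2 * S ^ 2 / r ^ 2 := by ring

theorem norm_poleField_le (hr : 0 < r) (hz : ∀ k, j ≠ k → r ≤ ‖z j - z k‖)
    (hσ : ∀ k, ‖toLp 2 (σ k)‖ ≤ S) :
    ‖-4 * ∑ k ∈ univ.erase j, σ j ⬝ᵥ σ k / (z j - z k) ^ 3‖ ≤
      4 * ((Fintype.card ι - 1 : ℝ) * (S ^ 2 / r ^ 3)) := by
  rw [norm_mul, norm_neg, Complex.norm_ofNat]
  gcongr
  refine norm_sum_erase_le _ j fun k hk => (norm_div_pow_le hr (hz k (Ne.symm hk)) 3).trans ?_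
  have hS : 0 ≤ S := (norm_nonneg _).trans (hσ j)
  gcongr
  exact (norm_dotProduct_le _ _).trans (by nlinarith [hσ j, hσ k, norm_nonneg (toLp 2 (σ k))])

end Field

theorem scattering_behavior_of_C1_general
    (N : ℕ) (t₀ η S : ℝ) (ht₀ : 0 < t₀) (hη : 0 < η)
    (x x' : Fin N → ℝ → ℂ) (s : Fin N → ℝ → (Fin 3 → ℂ))
    (hx : ∀ j t, HasDerivAt (x j) (x' j t) t)
    (hspinEq : ∀ j t, HasDerivAt (s j)
      (∑ k ∈ Finset.univ.erase j,
        ((2 * Complex.I) / (x j t - x k t) ^ 2) • (crossProduct (s j t) (s k t))) t)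
    (hpoleEq : ∀ j t, HasDerivAt (x' j)
      (-4 * ∑ k ∈ Finset.univ.erase j,
        (∑ i, s j t i * s k t i) / (x j t - x k t) ^ 3) t)
    (hsep : ∀ t, t₀ < t → ∀ j k, j ≠ k → η * t ≤ ‖x j t - x k t‖)
    (hbd : ∀ t, t₀ < t → ∀ j,
      Real.sqrt (∑ i, ‖s j t i‖ ^ 2) ≤ S) :
    ∃ v : Fin N → ℂ, ∀ j,
      Tendsto (x' j) atTop (nhds (v j)) ∧
      (∀ t, t₀ < t → ‖x' j t - v j‖ ≤
        4 * ((N : ℝ) - 1) * S ^ 2 / (η ^ 3 * t ^ 2)) ∧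
      (∃ l : ℂ, Tendsto (fun t => x j t - v j * (t : ℂ)) atTop (nhds l)) ∧
      (∃ sInf : Fin 3 → ℂ, Tendsto (s j) atTop (nhds sInf)) ∧
      (∀ t₁ t₂, t₀ < t₁ → t₁ ≤ t₂ →
        Real.sqrt (∑ i, ‖s j t₂ i - s j t₁ i‖ ^ 2) ≤
          2 * ((N : ℝ) - 1) * S ^ 2 / (η ^ 2 * t₁)) := by
  have hspin : ∀ t, t₀ < t → ∀ j, ‖toLp 2 (s j t)‖ ≤ S := by
    simpa [EuclideanSpace.norm_eq] using hbd
  have hηt : ∀ t, t₀ < t → 0 < η * t := fun t ht => mul_pos hη (ht₀.trans ht)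
  have hspinField : ∀ j t, t₀ < t → ‖toLp 2 (∑ k ∈ univ.erase j,
      (2 * Complex.I / (x j t - x k t) ^ 2) • s j t ⨯₃ s k t)‖ ≤
        2 * ((N : ℝ) - 1) * S ^ 2 / η ^ 2 / t ^ (0 + 2) := fun j t ht =>
    (norm_spinField_le (x · t) (s · t) j (hηt t ht) (hsep t ht j) (hspin t ht)).trans_eq
      (by rw [Fintype.card_fin]; ring)
  choose v hv hvRate using fun j => exists_tendsto_of_norm_deriv_le_div_pow 1 ht₀.le
    (C := 4 * ((N : ℝ) - 1) * S ^ 2 / η ^ 3) (fun t _ => hpoleEq j t) fun t ht =>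
      (norm_poleField_le (x · t) (s · t) j (hηt t ht) (hsep t ht j) (hspin t ht)).trans_eq
        (by rw [Fintype.card_fin]; ring)
  refine ⟨v, fun j => ⟨hv j, fun t ht => (hvRate j t ht).trans_eq (by ring), ?_, ?_,
    fun t₁ t₂ h₁ h₁₂ => ?_⟩⟩
  · obtain ⟨l, hl, -⟩ := exists_tendsto_of_norm_deriv_le_div_pow 0 ht₀.le
      (fun t _ => (hx j t).sub (((hasDerivAt_id t).ofReal_comp.const_mul (v j)).congr_deriv
        (mul_one _))) (hvRate j)
    exact ⟨l, hl⟩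
  · obtain ⟨L, hL, -⟩ := exists_tendsto_of_norm_deriv_le_div_pow 0 ht₀.le
      (fun t _ => (hspinEq j t).toLp 2) (hspinField j)
    exact ⟨ofLp L, ((PiLp.continuous_ofLp 2 _).tendsto L).comp hL⟩
  · have h := norm_sub_le_of_norm_deriv_le_div_pow 0 ht₀.le
      (fun t _ => (hspinEq j t).toLp 2) (hspinField j) h₁ h₁₂
    rw [← toLp_sub, EuclideanSpace.norm_eq] at h
    exact h.trans_eq (by ring)

/-- (C₁) ⇒ (C₃): for the spin Calogero–Moser system, if the poles separate at least linearly
and the spins stay bounded, then the speeds converge with rate `4(N-1)𝒮²/(η³t²)`, the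
translated poles converge, and the spins converge with the Cauchy estimate
`2(N-1)𝒮²/(η²t₁)`. -/
theorem scattering_behavior_of_C1
    (N : ℕ) (t₀ η S : ℝ) (ht₀ : 0 < t₀) (hη : 0 < η) (hS : 0 < S)
    (x x' : Fin N → ℝ → ℂ) (s : Fin N → ℝ → (Fin 3 → ℂ))
    (hx : ∀ j t, HasDerivAt (x j) (x' j t) t)
    (hspinEq : ∀ j t, HasDerivAt (s j)
      (∑ k ∈ Finset.univ.erase j,
        ((2 * Complex.I) / (x j t - x k t) ^ 2) • (crossProduct (s j t) (s k t))) t)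
    (hpoleEq : ∀ j t, HasDerivAt (x' j)
      (-4 * ∑ k ∈ Finset.univ.erase j,
        (∑ i, s j t i * s k t i) / (x j t - x k t) ^ 3) t)
    (hsep : ∀ t, t₀ < t → ∀ j k, j ≠ k → η * t ≤ ‖x j t - x k t‖)
    (hbd : ∀ t, t₀ < t → ∀ j,
      Real.sqrt (∑ i, ‖s j t i‖ ^ 2) ≤ S) :
    ∃ v : Fin N → ℂ, ∀ j,
      Tendsto (x' j) atTop (nhds (v j)) ∧
      (∀ t, t₀ < t → ‖x' j t - v j‖ ≤
        4 * ((N : ℝ) - 1) * S ^ 2 / (η ^ 3 * t ^ 2)) ∧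
      (∃ l : ℂ, Tendsto (fun t => x j t - v j * (t : ℂ)) atTop (nhds l)) ∧
      (∃ sInf : Fin 3 → ℂ, Tendsto (s j) atTop (nhds sInf)) ∧
      (∀ t₁ t₂, t₀ < t₁ → t₁ ≤ t₂ →
        Real.sqrt (∑ i, ‖s j t₂ i - s j t₁ i‖ ^ 2) ≤
          2 * ((N : ℝ) - 1) * S ^ 2 / (η ^ 2 * t₁)) :=
  scattering_behavior_of_C1_general N t₀ η S ht₀ hη x x' s hx hspinEq hpoleEq hsep hbd
end
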